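/- arXiv:1006.1436 — 5 statements merged into one kernel-verified Lean document; each statement's English description precedes it below -/
import Mathlib

section
/- Let u = x_{i_1}⋯x_{i_r} and v = x_{j_1}⋯x_{j_s} be monomials in weakly increasing factorization with r ≥ s. Define ℓ_t = min(i_t, j_t) for t ≤ s and ℓ_t = i_t for s < t ≤ r, and let w = x_{ℓ_1}⋯x_{ℓ_r}. Then Borel(u) ∩ Borel(v) = Borel(w). -/
/-- Borel order: `m1` precedes `m2`. -/
def BorelLe (m1 m2 : Multiset ℕ) : Prop :=
  Multiset.card m2 ≤ Multiset.card m1 ∧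
    ∀ j < Multiset.card m2,
      (m1.sort (· ≤ ·)).getD j 0 ≤ (m2.sort (· ≤ ·)).getD j 0

/-- `x` is in the principal Borel ideal `Borel(m)`. -/
def BorelMem (m x : Multiset ℕ) : Prop := ∃ v, BorelLe v m ∧ v ≤ x

/-!
Membership in a principal Borel ideal is itself a Borel comparison: `x ∈ Borel(m)` iff `x ⪰ m`,
since passing to a multiple only inserts entries into the sorted factorization and so can only
lower each order statistic. The theorem therefore says that `w` is the meet of `u` and `v` in the
Borel order, which is clear once one sees that the list `w` is already sorted, so that its order
statistics are the `ℓ_t`.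
-/

theorem List.Sublist.getElem_le_getElem_of_sortedLE {α : Type*} [Preorder α] {l l' : List α}
    (hs : l.Sublist l') (hl' : l'.SortedLE) {j : ℕ} (hj : j < l.length) :
    l'[j]'(hj.trans_le hs.length_le) ≤ l[j] := by
  obtain ⟨f, hf⟩ := List.sublist_iff_exists_orderEmbedding_getElem?_eq.1 hs
  have hfj := hf j
  rw [List.getElem?_eq_getElem hj, eq_comm, List.getElem?_eq_some_iff] at hfj
  obtain ⟨_, hfj_eq⟩ := hfj
  rw [← hfj_eq]
  exact hl'.getElem_le_getElem_of_le f.strictMono.le_apply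

theorem List.SortedLE.getD_le_getD {l : List ℕ} (hl : l.SortedLE) {i j : ℕ} (hij : i ≤ j)
    (hj : j < l.length) : l.getD i 0 ≤ l.getD j 0 := by
  rw [List.getD_eq_getElem _ _ (hij.trans_lt hj), List.getD_eq_getElem _ _ hj]
  exact hl.getElem_le_getElem_of_le hij

theorem Multiset.sort_sublist_sort {α : Type*} [LinearOrder α] {a b : Multiset α} (hab : a ≤ b) :
    (a.sort (· ≤ ·)).Sublist (b.sort (· ≤ ·)) :=
  List.sublist_of_subperm_of_sortedLE (by rwa [← Multiset.coe_le, sort_eq, sort_eq])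
    (pairwise_sort _ _).sortedLE (pairwise_sort _ _).sortedLE

theorem Multiset.sort_coe_of_sortedLE {α : Type*} [LinearOrder α] {l : List α} (hl : l.SortedLE) :
    (l : Multiset α).sort (· ≤ ·) = l :=
  List.mergeSort_eq_self _ hl.pairwise

theorem borelLe_of_le {a b : Multiset ℕ} (hab : a ≤ b) : BorelLe b a := by
  refine ⟨Multiset.card_le_card hab, fun j hj => ?_⟩
  have hs := Multiset.sort_sublist_sort hab
  have hja : j < (a.sort (· ≤ ·)).length := by rwa [Multiset.length_sort]
  rw [List.getD_eq_getElem _ _ hja, List.getD_eq_getElem _ _ (hja.trans_le hs.length_le)]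
  exact hs.getElem_le_getElem_of_sortedLE (Multiset.pairwise_sort _ _).sortedLE hja

theorem BorelLe.trans {a b c : Multiset ℕ} (hab : BorelLe a b) (hbc : BorelLe b c) :
    BorelLe a c :=
  ⟨hbc.1.trans hab.1, fun j hj => (hab.2 j (hj.trans_le hbc.1)).trans (hbc.2 j hj)⟩

theorem borelMem_iff_borelLe {m x : Multiset ℕ} : BorelMem m x ↔ BorelLe x m :=
  ⟨fun ⟨_, hvm, hvx⟩ => (borelLe_of_le hvx).trans hvm, fun h => ⟨x, h, le_rfl⟩⟩

def borelMeet (u v : Multiset ℕ) : List ℕ :=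
  List.zipWith min (u.sort (· ≤ ·))
    ((v.sort (· ≤ ·)) ++ (u.sort (· ≤ ·)).drop (Multiset.card v))

section borelMeet

variable {u v : Multiset ℕ}

theorem length_borelMeet (h : Multiset.card v ≤ Multiset.card u) :
    (borelMeet u v).length = Multiset.card u := by
  simp only [borelMeet, List.length_zipWith, List.length_append, List.length_drop,
    Multiset.length_sort]
  omega

theorem getD_borelMeet (j : ℕ) : (borelMeet u v).getD j 0 =
    if j < Multiset.card v then min ((u.sort (· ≤ ·)).getD j 0) ((v.sort (· ≤ ·)).getD j 0)
    else (u.sort (· ≤ ·)).getD j 0 := by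
  simp only [borelMeet, List.getD_eq_getElem?_getD, List.getElem?_zipWith, List.getElem?_append,
    List.getElem?_drop, Multiset.length_sort]
  split_ifs with hj
  · cases (u.sort (· ≤ ·))[j]? <;> cases (v.sort (· ≤ ·))[j]? <;> simp
  · rw [Nat.add_sub_cancel' (not_lt.1 hj)]
    cases (u.sort (· ≤ ·))[j]? <;> simp

theorem sortedLE_borelMeet : (borelMeet u v).SortedLE := by
  have hu := (Multiset.pairwise_sort u (· ≤ ·)).sortedLE
  have hv := (Multiset.pairwise_sort v (· ≤ ·)).sortedLE
  refine List.sortedLE_of_getElem_le_getElem_of_le fun i j _ hj hij => ?_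
  have hju : j < (u.sort (· ≤ ·)).length :=
    hj.trans_le (by simp only [borelMeet, List.length_zipWith]; exact min_le_left _ _)
  rw [← List.getD_eq_getElem _ 0, ← List.getD_eq_getElem _ 0, getD_borelMeet, getD_borelMeet]
  split_ifs with hi hj'
  · have hjv : j < (v.sort (· ≤ ·)).length := by rwa [Multiset.length_sort]
    exact min_le_min (hu.getD_le_getD hij hju) (hv.getD_le_getD hij hjv)
  · exact (min_le_left _ _).trans (hu.getD_le_getD hij hju)
  · omega
  · exact hu.getD_le_getD hij hju

theorem borelLe_borelMeet_iff (h : Multiset.card v ≤ Multiset.card u) {z : Multiset ℕ} :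
    BorelLe z (borelMeet u v) ↔ BorelLe z u ∧ BorelLe z v := by
  simp only [BorelLe, Multiset.coe_card, length_borelMeet h,
    Multiset.sort_coe_of_sortedLE sortedLE_borelMeet, getD_borelMeet]
  constructor
  · rintro ⟨hcard, hle⟩
    refine ⟨⟨hcard, fun j hj => (hle j hj).trans ?_⟩,
      ⟨h.trans hcard, fun j hj => (hle j (hj.trans_le h)).trans ?_⟩⟩
    · split_ifs
      · exact min_le_left _ _
      · exact le_rfl
    · rw [if_pos hj]
      exact min_le_right _ _
  · rintro ⟨⟨hcard, hleu⟩, ⟨-, hlev⟩⟩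
    refine ⟨hcard, fun j hj => ?_⟩
    split_ifs with hjv
    · exact le_min (hleu j hj) (hlev j hjv)
    · exact hleu j hj

end borelMeet

/-- `Borel(u) ∩ Borel(v) = Borel(w)` where `w` is the termwise minimum (the
meet of `u` and `v` in the Borel order): `ℓ_t = min(i_t, j_t)` for `t ≤ s`
and `ℓ_t = i_t` for `s < t ≤ r`. -/
theorem borel_inter (u v : Multiset ℕ) (h : Multiset.card v ≤ Multiset.card u) :
    ∀ x : Multiset ℕ,
      (BorelMem u x ∧ BorelMem v x) ↔
        BorelMem (↑(List.zipWith min (u.sort (· ≤ ·))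
          ((v.sort (· ≤ ·)) ++ (u.sort (· ≤ ·)).drop (Multiset.card v))) : Multiset ℕ) x := by
  intro x
  simp only [borelMem_iff_borelLe]
  exact (borelLe_borelMeet_iff h).symm
end

section
/- For monomials u and v, the product of principal Borel ideals satisfies Borel(u)·Borel(v) = Borel(uv); that is, a monomial w lies in Borel(uv) if and only if w = w1·w2·w3 for some monomials w1 ∈ Borel(u), w2 ∈ Borel(v), and arbitrary monomial w3. -/
theorem List.SortedLE.getElem_le_iff_lt_countP {α : Type*} [LinearOrder α] {l : List α}
    (hl : l.SortedLE) {j : ℕ} (hj : j < l.length) (s : α) :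
    l[j] ≤ s ↔ j < l.countP (· ≤ s) := by
  constructor
  · intro hjs
    have hprefix : ∀ x ∈ l.take (j + 1), decide (x ≤ s) = true := by
      intro x hx
      obtain ⟨i, hi, rfl⟩ := List.getElem_of_mem hx
      simp only [List.length_take] at hi
      simpa using (hl.getElem_le_getElem_of_le (by omega : i ≤ j)).trans hjs
    calc j < (l.take (j + 1)).countP (· ≤ s) := by
          rw [List.countP_eq_length.mpr hprefix, List.length_take]; omega
      _ ≤ l.countP (· ≤ s) := (List.take_sublist _ _).countP_le
  · intro hlt
    by_contra! hsj
    have hsuffix : (l.drop j).countP (· ≤ s) = 0 := by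
      refine List.countP_eq_zero.mpr fun x hx => ?_
      obtain ⟨i, hi, rfl⟩ := List.getElem_of_mem hx
      simpa [List.getElem_drop] using hsj.trans_le (hl.getElem_le_getElem_of_le (by omega))
    have hprefix := (List.take j l).countP_le_length (p := (· ≤ s))
    rw [← List.take_append_drop j l, List.countP_append, hsuffix] at hlt
    simp only [List.length_take] at hprefix
    omega

theorem Multiset.countP_sort {α : Type*} (r : α → α → Prop) [DecidableRel r] [IsTrans α r]
    [Std.Antisymm r] [Std.Total r] (m : Multiset α) (p : α → Prop) [DecidablePred p] :
    (m.sort r).countP (p ·) = m.countP p := by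
  rw [← Multiset.coe_countP, Multiset.sort_eq]

open Multiset

theorem borelLe_iff_countP {a b : Multiset ℕ} :
    BorelLe a b ↔ card b ≤ card a ∧ ∀ s, b.countP (· ≤ s) ≤ a.countP (· ≤ s) := by
  rw [BorelLe]
  set A := a.sort (· ≤ ·)
  set B := b.sort (· ≤ ·)
  have hA : A.SortedLE := (pairwise_sort _ _).sortedLE
  have hB : B.SortedLE := (pairwise_sort _ _).sortedLE
  have hlenA : A.length = card a := length_sort _
  have hlenB : B.length = card b := length_sort _
  refine and_congr_right fun hcard => ⟨fun h s => ?_, fun h j hj => ?_⟩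
  · by_contra! hlt
    set j := a.countP (· ≤ s)
    have hjb : j < B.length := hlenB ▸ hlt.trans_le (countP_le_card _ _)
    have hBj : B[j] ≤ s := (hB.getElem_le_iff_lt_countP hjb s).mpr (by rwa [countP_sort])
    have hAj : A[j] ≤ s := by
      have hABj := h j (hlenB ▸ hjb)
      rw [List.getD_eq_getElem _ _ (by omega), List.getD_eq_getElem _ _ hjb] at hABj
      exact hABj.trans hBj
    have hj := (hA.getElem_le_iff_lt_countP (by omega) s).mp hAj
    rw [countP_sort] at hj
    exact lt_irrefl j hj
  · have hjB : j < B.length := by omega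
    rw [List.getD_eq_getElem _ _ (by omega), List.getD_eq_getElem _ _ hjB,
      hA.getElem_le_iff_lt_countP, countP_sort]
    calc j < b.countP (· ≤ B[j]) := by
          rw [← countP_sort (· ≤ ·), ← hB.getElem_le_iff_lt_countP hjB]
      _ ≤ a.countP (· ≤ B[j]) := h _

theorem borelLe_zero_right (m : Multiset ℕ) : BorelLe m 0 :=
  borelLe_iff_countP.mpr ⟨by simp, by simp⟩

namespace BorelLe

theorem add {a b u v : Multiset ℕ} (hau : BorelLe a u) (hbv : BorelLe b v) :
    BorelLe (a + b) (u + v) := by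
  rw [borelLe_iff_countP] at hau hbv ⊢
  simp only [card_add, countP_add]
  exact ⟨add_le_add hau.1 hbv.1, fun s => add_le_add (hau.2 s) (hbv.2 s)⟩

theorem cons {a b : Multiset ℕ} {x c : ℕ} (hxc : x ≤ c) (h : BorelLe a b) :
    BorelLe (x ::ₘ a) (c ::ₘ b) := by
  rw [borelLe_iff_countP] at h ⊢
  refine ⟨by simpa using h.1, fun s => ?_⟩
  have hs := h.2 s
  simp only [countP_cons]
  split_ifs <;> omega

theorem exists_eq_cons_of_forall_le {m b : Multiset ℕ} {c : ℕ} (hc : ∀ y ∈ b, c ≤ y)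
    (h : BorelLe m (c ::ₘ b)) : ∃ x m', m = x ::ₘ m' ∧ x ≤ c ∧ BorelLe m' b := by
  rw [borelLe_iff_countP] at h
  obtain ⟨x, hxm, hxc⟩ : ∃ x ∈ m, x ≤ c := by
    simpa using countP_pos.mp ((h.2 c).trans_lt' (by simp))
  obtain ⟨m', rfl⟩ := exists_cons_of_mem hxm
  refine ⟨x, m', rfl, hxc, borelLe_iff_countP.mpr ⟨by simpa using h.1, fun s => ?_⟩⟩
  have hs := h.2 s
  simp only [countP_cons] at hs
  by_cases hcs : c ≤ s
  · simp only [if_pos hcs, if_pos (hxc.trans hcs)] at hs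
    omega
  · rw [countP_eq_zero.mpr fun y hy hys => hcs ((hc y hy).trans hys)]
    exact Nat.zero_le _

theorem exists_add_eq {m u v : Multiset ℕ} (h : BorelLe m (u + v)) :
    ∃ m₁ m₂, m = m₁ + m₂ ∧ BorelLe m₁ u ∧ BorelLe m₂ v := by
  obtain ⟨n, hn⟩ : ∃ n, card (u + v) = n := ⟨_, rfl⟩
  induction n generalizing m u v with
  | zero =>
    obtain ⟨rfl, rfl⟩ : u = 0 ∧ v = 0 := by simpa using hn
    exact ⟨0, m, by simp, borelLe_zero_right 0, borelLe_zero_right m⟩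
  | succ n ih =>
    obtain ⟨c, hc, hmin⟩ : ∃ c ∈ u + v, ∀ y ∈ u + v, c ≤ y := by
      obtain ⟨c, hc, hmin⟩ := (u + v).toFinset.exists_min_image id
        (toFinset_nonempty.mpr (card_pos.mp (by omega)))
      exact ⟨c, by simpa using hc, fun y hy => hmin y (by simpa using hy)⟩
    wlog hcu : c ∈ u generalizing u v
    · obtain ⟨m₂, m₁, rfl, h₂, h₁⟩ :=
        this (add_comm u v ▸ h) (add_comm u v ▸ hn) (add_comm u v ▸ hc)
          (add_comm u v ▸ hmin) (by simpa [hcu] using hc)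
      exact ⟨m₁, m₂, add_comm _ _, h₁, h₂⟩
    obtain ⟨u', rfl⟩ := exists_cons_of_mem hcu
    rw [cons_add] at h hn hmin
    obtain ⟨x, m', rfl, hxc, h'⟩ :=
      h.exists_eq_cons_of_forall_le fun y hy => hmin y (mem_cons_of_mem hy)
    obtain ⟨m₁, m₂, rfl, h₁, h₂⟩ := ih h' (by simpa using hn)
    exact ⟨x ::ₘ m₁, m₂, (cons_add _ _ _).symm, h₁.cons hxc, h₂⟩

end BorelLe

/-- Monomials are multisets of variable indices, so products of monomials are sums. -/
theorem borel_mul (u v : Multiset ℕ) :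
    ∀ w : Multiset ℕ,
      BorelMem (u + v) w ↔
        ∃ w1 w2 w3 : Multiset ℕ, BorelMem u w1 ∧ BorelMem v w2 ∧ w = w1 + w2 + w3 := by
  intro w
  constructor
  · rintro ⟨m, hm, hmw⟩
    obtain ⟨m₁, m₂, rfl, h₁, h₂⟩ := hm.exists_add_eq
    exact ⟨m₁, m₂, w - (m₁ + m₂), ⟨m₁, h₁, le_rfl⟩, ⟨m₂, h₂, le_rfl⟩,
      (add_tsub_cancel_of_le hmw).symm⟩
  · rintro ⟨w₁, w₂, w₃, ⟨m₁, h₁, hm₁⟩, ⟨m₂, h₂, hm₂⟩, rfl⟩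
    exact ⟨m₁ + m₂, h₁.add h₂, (add_le_add hm₁ hm₂).trans (le_add_right _ _)⟩
end

section
/- For a monomial u in x_1,…,x_n, the product of the maximal ideal with the principal Borel ideal satisfies m·Borel(u) = Borel(u·x_n), where m = (x_1,…,x_n). That is, a monomial w lies in Borel(u·x_n) if and only if w = x_i · w' for some i and some w' ∈ Borel(u). -/
namespace List

variable {α : Type*} [LinearOrder α]

theorem SortedLE.getElem_le_of_sublist {l l' : List α} (hl' : l'.SortedLE) (h : l <+ l')
    {j : ℕ} (hj : j < l.length) : l'[j]'(hj.trans_le h.length_le) ≤ l[j] := by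
  obtain ⟨f, hf⟩ := sublist_iff_exists_orderEmbedding_getElem?_eq.mp h
  have hfj : f j < l'.length := by
    have := hf j
    rw [getElem?_eq_getElem hj, eq_comm, getElem?_eq_some_iff] at this
    exact this.1
  have hjf : l[j] = l'[f j] := by
    simpa [getElem?_eq_getElem hj, getElem?_eq_getElem hfj] using hf j
  exact hjf ▸ hl'.getElem_le_getElem_of_le (f.strictMono.id_le j)

end List

namespace Multiset

variable {α : Type*} [LinearOrder α]

theorem getD_sort_le_getD_sort_of_le {s t : Multiset α} (hst : s ≤ t) (d : α) {j : ℕ}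
    (hj : j < card s) : (t.sort (· ≤ ·)).getD j d ≤ (s.sort (· ≤ ·)).getD j d := by
  have hsub : (s.sort (· ≤ ·)).Sublist (t.sort (· ≤ ·)) :=
    List.sublist_of_subperm_of_pairwise
      (by rwa [← coe_le, sort_eq, sort_eq]) (pairwise_sort s _) (pairwise_sort t _)
  have hjs : j < (s.sort (· ≤ ·)).length := by rwa [length_sort]
  rw [List.getD_eq_getElem _ _ hjs, List.getD_eq_getElem _ _ (hjs.trans_le hsub.length_le)]
  exact (pairwise_sort t _).sortedLE.getElem_le_of_sublist hsub hjs

theorem sort_cons_of_forall_le {s : Multiset α} {a : α} (h : ∀ b ∈ s, b ≤ a) :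
    (a ::ₘ s).sort (· ≤ ·) = s.sort (· ≤ ·) ++ [a] := by
  refine List.Perm.eq_of_pairwise' (pairwise_sort _ _) ?_ ?_
  · exact List.pairwise_append.mpr ⟨pairwise_sort _ _, List.pairwise_singleton _ a,
      fun b hb a' ha' => (List.mem_singleton.mp ha') ▸ h b ((mem_sort _).mp hb)⟩
  · rw [← coe_eq_coe, sort_eq, coe_eq_coe.mpr (List.perm_append_singleton a _), ← cons_coe,
      sort_eq]

end Multiset

open Multiset

theorem BorelLe.erase_of_cons {v u : Multiset ℕ} {a i : ℕ} (h : BorelLe v (a ::ₘ u))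
    (hi : i ∈ v) (hmax : ∀ x ∈ v, x ≤ i) : BorelLe (v.erase i) u := by
  obtain ⟨hcard, hle⟩ := h
  have hv : i ::ₘ v.erase i = v := cons_erase hi
  have hsort : v.sort (· ≤ ·) = (v.erase i).sort (· ≤ ·) ++ [i] := by
    rw [← sort_cons_of_forall_le fun x hx => hmax x (mem_of_mem_erase hx), hv]
  rw [← hv, card_cons, card_cons] at hcard
  refine ⟨by omega, fun j hj => ?_⟩
  calc ((v.erase i).sort (· ≤ ·)).getD j 0 = (v.sort (· ≤ ·)).getD j 0 := by
        rw [hsort, List.getD_append _ _ _ _ (by rw [length_sort]; omega)]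
    _ ≤ ((a ::ₘ u).sort (· ≤ ·)).getD j 0 := hle j (by rw [card_cons]; omega)
    _ ≤ (u.sort (· ≤ ·)).getD j 0 := getD_sort_le_getD_sort_of_le (le_cons_self u a) 0 hj

theorem BorelLe.cons_s7 {v u : Multiset ℕ} {n i : ℕ} (h : BorelLe v u) (hu : ∀ x ∈ u, x ≤ n)
    (hv : ∀ x ∈ v, x ≤ n) (hi : i ≤ n) : BorelLe (i ::ₘ v) (n ::ₘ u) := by
  obtain ⟨hcard, hle⟩ := h
  refine ⟨by simpa using hcard, fun j hj => ?_⟩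
  rw [sort_cons_of_forall_le hu]
  rcases (Nat.lt_succ_iff_lt_or_eq.mp (card_cons n u ▸ hj)) with hj | rfl
  · rw [List.getD_append _ _ _ _ (by rwa [length_sort])]
    exact (getD_sort_le_getD_sort_of_le (le_cons_self v i) 0 (hj.trans_le hcard)).trans
      (hle j hj)
  · rw [List.getD_append_right _ _ _ _ (length_sort _).le]
    simp only [length_sort, Nat.sub_self, List.getD_cons_zero]
    have hlt : card u < ((i ::ₘ v).sort (· ≤ ·)).length := by
      rw [length_sort, card_cons]; omega
    rw [List.getD_eq_getElem _ _ hlt]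
    obtain hx | hx := mem_cons.mp ((mem_sort _).mp (List.getElem_mem hlt))
    exacts [hx.trans_le hi, hv _ hx]

theorem maximal_ideal_mul_borel_general (n : ℕ) (u : Multiset ℕ)
    (hu : ∀ x ∈ u, 1 ≤ x ∧ x ≤ n) (w : Multiset ℕ) (hw : ∀ x ∈ w, 1 ≤ x ∧ x ≤ n) :
    BorelMem (n ::ₘ u) w ↔
      ∃ i : ℕ, 1 ≤ i ∧ i ≤ n ∧ ∃ w' : Multiset ℕ, BorelMem u w' ∧ w = i ::ₘ w' := by
  constructor
  · rintro ⟨v, hvu, hvw⟩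
    have hv : v ≠ 0 := card_pos.mp (lt_of_lt_of_le (by simp) hvu.1)
    obtain ⟨i, hiv, hmax⟩ := v.toFinset.exists_max_image id (toFinset_nonempty.mpr hv)
    rw [mem_toFinset] at hiv
    have hiw : i ∈ w := mem_of_le hvw hiv
    exact ⟨i, (hw i hiw).1, (hw i hiw).2, w.erase i,
      ⟨v.erase i, hvu.erase_of_cons hiv fun x hx => hmax x (mem_toFinset.mpr hx),
        erase_le_erase i hvw⟩, (cons_erase hiw).symm⟩
  · rintro ⟨i, -, hin, w', ⟨v, hvu, hvw'⟩, rfl⟩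
    exact ⟨i ::ₘ v, hvu.cons_s7 (fun x hx => (hu x hx).2)
      (fun x hx => (hw x (mem_cons_of_mem (mem_of_le hvw' hx))).2) hin, cons_le_cons i hvw'⟩

/-- `m·Borel(u) = Borel(u·x_n)` where `m = (x_1,…,x_n)`: a monomial `w` (in
`x_1,…,x_n`) lies in `Borel(u·x_n)` iff `w = x_i·w'` for some `1 ≤ i ≤ n`
and some `w' ∈ Borel(u)`. -/
theorem maximal_ideal_mul_borel (n : ℕ) (hn : 1 ≤ n) (u : Multiset ℕ)
    (hu : ∀ x ∈ u, 1 ≤ x ∧ x ≤ n) (w : Multiset ℕ) (hw : ∀ x ∈ w, 1 ≤ x ∧ x ≤ n) :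
    BorelMem (n ::ₘ u) w ↔
      ∃ i : ℕ, 1 ≤ i ∧ i ≤ n ∧ ∃ w' : Multiset ℕ, BorelMem u w' ∧ w = i ::ₘ w' :=
  maximal_ideal_mul_borel_general n u hu w hw
end

section
/- For a principal Borel ideal B = Borel(m) and an index p with x_p dividing m, the monomial m/x_p is a p-socle: the set of monomials w with (m/x_p)·w ∈ B is exactly the monomial ideal generated by x_1,…,x_p. In particular, (m/x_p)·x_{p+1}^N ∉ Borel(m) for every N ≥ 0, while (m/x_p)·x_q ∈ Borel(m) for every q ≤ p. -/
section Sorted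

variable {α : Type*} [LinearOrder α]

theorem List.getD_le_iff_lt_countP {l : List α} (hl : l.Pairwise (· ≤ ·)) {j : ℕ}
    (hj : j < l.length) (d p : α) :
    l.getD j d ≤ p ↔ j < l.countP (· ≤ p) := by
  induction l generalizing j with
  | nil => simp at hj
  | cons a t ih =>
    rw [List.pairwise_cons] at hl
    by_cases hap : a ≤ p
    · cases j with
      | zero => simp [hap]
      | succ j =>
        rw [List.getD_cons_succ, ih hl.2 (by simpa using hj), List.countP_cons_of_pos (by simpa)]
        omega
    · have hcount : (a :: t).countP (· ≤ p) = 0 :=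
        List.countP_eq_zero.mpr fun x hx => by
          rcases List.mem_cons.mp hx with rfl | hx
          · simpa using hap
          · simpa using lt_of_lt_of_le (not_le.mp hap) (hl.1 x hx)
      have hentry : (a :: t).getD j d ∈ a :: t := by
        rw [List.getD_eq_getElem _ _ hj]
        exact List.getElem_mem hj
      have ha_le : a ≤ (a :: t).getD j d := by
        rcases List.mem_cons.mp hentry with h | h
        · exact h.ge
        · exact hl.1 _ h
      rw [hcount]
      simpa using lt_of_lt_of_le (not_le.mp hap) ha_le

theorem Multiset.getD_sort_le_iff_lt_countP (s : Multiset α) {j : ℕ}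
    (hj : j < Multiset.card s) (d p : α) :
    (s.sort (· ≤ ·)).getD j d ≤ p ↔ j < s.countP (· ≤ p) := by
  rw [List.getD_le_iff_lt_countP (s.pairwise_sort _) (by rwa [Multiset.length_sort]),
    ← Multiset.coe_countP, Multiset.sort_eq]

end Sorted

theorem borelLe_iff_countP_s9 {v m : Multiset ℕ} :
    BorelLe v m ↔ Multiset.card m ≤ Multiset.card v ∧
      ∀ r, m.countP (· ≤ r) ≤ v.countP (· ≤ r) := by
  constructor
  · rintro ⟨hcard, hsort⟩
    refine ⟨hcard, fun r => ?_⟩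
    rcases Nat.eq_zero_or_pos (m.countP (· ≤ r)) with h0 | hpos
    · omega
    have hcm : m.countP (· ≤ r) ≤ Multiset.card m := Multiset.countP_le_card _ m
    have hm_entry := (m.getD_sort_le_iff_lt_countP (j := m.countP (· ≤ r) - 1) (by omega)
      0 r).mpr (by omega)
    have hv_count := (v.getD_sort_le_iff_lt_countP (j := m.countP (· ≤ r) - 1) (by omega)
      0 r).mp ((hsort _ (by omega)).trans hm_entry)
    omega
  · rintro ⟨hcard, hcount⟩
    refine ⟨hcard, fun j hj => ?_⟩
    set r := (m.sort (· ≤ ·)).getD j 0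
    have hm_count := (m.getD_sort_le_iff_lt_countP hj 0 r).mp le_rfl
    exact (v.getD_sort_le_iff_lt_countP (hj.trans_le hcard) 0 r).mpr
      (hm_count.trans_le (hcount r))

theorem borelLe_cons_cons {q p : ℕ} (hqp : q ≤ p) (s : Multiset ℕ) :
    BorelLe (q ::ₘ s) (p ::ₘ s) := by
  refine borelLe_iff_countP_s9.mpr ⟨by simp, fun r => ?_⟩
  simp only [Multiset.countP_cons]
  split_ifs <;> omega

theorem borelMem_erase_add_iff {m : Multiset ℕ} {p : ℕ} (hp : p ∈ m) (w : Multiset ℕ) :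
    BorelMem m (m.erase p + w) ↔ ∃ q ∈ w, q ≤ p := by
  constructor
  · rintro ⟨v, hv, hvle⟩
    by_contra! hw
    have hw_count : w.countP (· ≤ p) = 0 :=
      Multiset.countP_eq_zero.mpr fun q hq => by simpa using hw q hq
    have hm_count : m.countP (· ≤ p) = (m.erase p).countP (· ≤ p) + 1 := by
      conv_lhs => rw [← Multiset.cons_erase hp]
      simp
    have h_lower := (borelLe_iff_countP_s9.mp hv).2 p
    have h_upper := Multiset.countP_le_of_le (· ≤ p) hvle
    rw [Multiset.countP_add, hw_count] at h_upper
    omega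
  · rintro ⟨q, hqw, hqp⟩
    refine ⟨q ::ₘ m.erase p, ?_, ?_⟩
    · simpa only [Multiset.cons_erase hp] using borelLe_cons_cons hqp (m.erase p)
    · rw [← Multiset.singleton_add, add_comm]
      exact add_le_add_right (Multiset.singleton_le.mpr hqw) _

theorem principal_borel_p_socle_general (m : Multiset ℕ) (p : ℕ)
    (hp : p ∈ m) :
    (∀ w : Multiset ℕ, (∀ x ∈ w, 1 ≤ x) →
      (BorelMem m (m.erase p + w) ↔ ∃ q ∈ w, q ≤ p)) ∧
    (∀ N : ℕ, ¬ BorelMem m (m.erase p + Multiset.replicate N (p + 1))) ∧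
    (∀ q : ℕ, 1 ≤ q → q ≤ p → BorelMem m (q ::ₘ m.erase p)) := by
  refine ⟨fun w _ => borelMem_erase_add_iff hp w, fun N h => ?_, fun q _ hqp => ?_⟩
  · obtain ⟨q, hq, hqp⟩ := (borelMem_erase_add_iff hp _).mp h
    have := Multiset.eq_of_mem_replicate hq
    omega
  · rw [← Multiset.singleton_add, add_comm]
    exact (borelMem_erase_add_iff hp {q}).mpr ⟨q, Multiset.mem_singleton_self q, hqp⟩

/-- For a principal Borel ideal `B = Borel(m)` and `x_p ∣ m`, the monomial
`m/x_p` is a `p`-socle: the monomials `w` with `(m/x_p)·w ∈ B` are exactly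
those in the ideal `(x_1,…,x_p)`.  In particular `(m/x_p)·x_{p+1}^N ∉ B` for
all `N ≥ 0` while `(m/x_p)·x_q ∈ B` for all `1 ≤ q ≤ p`. -/
theorem principal_borel_p_socle (m : Multiset ℕ) (p : ℕ)
    (hm : ∀ x ∈ m, 1 ≤ x) (hp : p ∈ m) :
    (∀ w : Multiset ℕ, (∀ x ∈ w, 1 ≤ x) →
      (BorelMem m (m.erase p + w) ↔ ∃ q ∈ w, q ≤ p)) ∧
    (∀ N : ℕ, ¬ BorelMem m (m.erase p + Multiset.replicate N (p + 1))) ∧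
    (∀ q : ℕ, 1 ≤ q → q ≤ p → BorelMem m (q ::ₘ m.erase p)) :=
  principal_borel_p_socle_general m p hp
end

section
/- Define b_i(n) = Σ_{j=1}^{n} binom(j−1, i)·w_j(n), where w_j(n) is the number of weakly increasing sequences (a_1,…,a_n) with a_t ≤ t for all t and a_n = j. Then for all n ≥ 1 and all i, b_{i−1}(n) + b_i(n−1) = binom(n, i)·C_{n−1}, where C_{n−1} is the (n−1)-st Catalan number. -/
/-- Minimal generators of `Borel(x_1 x_2 ⋯ x_n)`: weakly increasing sequences
`(a_1,…,a_n)` of positive integers with `a_t ≤ t` for all `t`. -/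
def borelGens (n : ℕ) : Set (List ℕ) :=
  {l | l.length = n ∧ l.Chain' (· ≤ ·) ∧
    ∀ t < l.length, 1 ≤ l.getD t 0 ∧ l.getD t 0 ≤ t + 1}

/-- `w n j`: the number of such sequences with `a_n = j`. -/
noncomputable def w (n j : ℕ) : ℕ :=
  Set.ncard {l ∈ borelGens n | l.getLast? = some j}

/-- `b n i = Σ_{j=1}^n binom(j-1,i)·w_j(n)`, the `i`-th total Betti number of
`Borel(x_1⋯x_n)` via the Eliahou–Kervaire formula. -/
noncomputable def b (n i : ℕ) : ℕ :=
  ∑ j ∈ Finset.Icc 1 n, Nat.choose (j - 1) i * w n j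


/-!
Deleting the last entry `j + 1` of a generator of length `n + 1` leaves a generator of length
`n` whose last entry `k + 1` satisfies `k ≤ j`, so `w (n + 1) (j + 1)` is a prefix sum of
`w n (· + 1)`. Prefix sums of the Catalan triangle `binom(n + j, j) - binom(n + j, n + 1)` are
again the Catalan triangle (Pascal's rule on both terms), and its diagonal is `C_n`; hence
`∑_j w n j = w (n + 1) (n + 1) = C_n`. Substituting the prefix-sum recursion into `b (n + 1) i`
and exchanging the sums, the coefficient of `w n (k + 1)` in `b (n + 1) i + b n (i + 1)` is
`∑_{k ≤ j ≤ n} binom(j, i) + binom(k, i + 1) = binom(n + 1, i + 1)` by the hockey-stick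
identity.
-/

lemma append_singleton_mem_borelGens_succ_iff {n j : ℕ} {l : List ℕ} :
    l ++ [j] ∈ borelGens (n + 1) ↔
      l ∈ borelGens n ∧ (∀ k ∈ l.getLast?, k ≤ j) ∧ 1 ≤ j ∧ j ≤ n + 1 := by
  unfold borelGens List.Chain'
  simp +contextual only [Set.mem_ofPred_eq, List.length_append, List.length_singleton,
    Nat.forall_lt_succ_right, List.isChain_append, List.getD_append, List.getD_append_right,
    le_refl, Nat.sub_self, List.getD_cons_zero, List.isChain_singleton, List.head?_cons,
    Option.mem_def, Option.some.injEq, forall_eq', true_and, Nat.add_right_cancel_iff]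
  constructor
  · rintro ⟨rfl, ⟨hc, hl⟩, hb, hj⟩
    exact ⟨⟨rfl, hc, hb⟩, hl, hj⟩
  · rintro ⟨⟨rfl, hc, hb⟩, hl, hj⟩
    exact ⟨rfl, ⟨hc, hl⟩, hb, hj⟩

lemma mem_Icc_of_getLast?_eq {n j : ℕ} {l : List ℕ} (hl : l ∈ borelGens n)
    (hj : l.getLast? = some j) : j ∈ Set.Icc 1 n := by
  obtain ⟨l', rfl⟩ := List.getLast?_eq_some_iff.mp hj
  obtain ⟨m, rfl⟩ : ∃ m, n = m + 1 := ⟨l'.length, by rw [← hl.1]; simp⟩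
  exact (append_singleton_mem_borelGens_succ_iff.mp hl).2.2

lemma borelGens_finite (n : ℕ) : (borelGens n).Finite := by
  refine ((List.finite_length_eq (Fin (n + 1)) n).image (List.map Fin.val)).subset ?_
  rintro l ⟨hlen, -, hb⟩
  have hlt : ∀ t (ht : t < l.length), l[t] < n + 1 := fun t ht => by
    have := (hb t ht).2
    rw [List.getD_eq_getElem l 0 ht] at this
    omega
  refine ⟨List.ofFn fun t : Fin l.length => ⟨l[t], hlt t t.2⟩, by simpa using hlen, ?_⟩
  exact List.ext_getElem (by simp) fun t _ _ => by simp

def borelGensLast (n j : ℕ) : Set (List ℕ) := {l ∈ borelGens n | l.getLast? = some j}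

lemma borelGensLast_succ_succ {n j : ℕ} (hn : 1 ≤ n) (hj : j ≤ n) :
    borelGensLast (n + 1) (j + 1) =
      (· ++ [j + 1]) '' ⋃ k ∈ Finset.range (j + 1), borelGensLast n (k + 1) := by
  ext l
  simp only [borelGensLast, Set.mem_image, Set.mem_iUnion, Finset.mem_range,
    Set.mem_ofPred_eq]
  constructor
  · rintro ⟨hl, hlast⟩
    obtain ⟨l', rfl⟩ := List.getLast?_eq_some_iff.mp hlast
    obtain ⟨hl', hle, -⟩ := append_singleton_mem_borelGens_succ_iff.mp hl
    have hne : l' ≠ [] := List.ne_nil_of_length_pos (hl'.1 ▸ hn)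
    obtain ⟨k', hk'⟩ := Option.isSome_iff_exists.mp (List.getLast?_isSome.mpr hne)
    obtain ⟨k, rfl⟩ := Nat.exists_eq_add_of_le' (mem_Icc_of_getLast?_eq hl' hk').1
    exact ⟨l', ⟨k, by have := hle _ hk'; omega, hl', hk'⟩, rfl⟩
  · rintro ⟨l', ⟨k, hk, hl', hlast⟩, rfl⟩
    refine ⟨append_singleton_mem_borelGens_succ_iff.mpr ⟨hl', ?_, by omega, by omega⟩,
      by simp⟩
    simp only [hlast, Option.mem_def, Option.some.injEq, forall_eq']
    omega

lemma w_eq_ncard_borelGensLast (n j : ℕ) : w n j = (borelGensLast n j).ncard := rfl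

lemma w_succ_succ {n j : ℕ} (hn : 1 ≤ n) (hj : j ≤ n) :
    w (n + 1) (j + 1) = ∑ k ∈ Finset.range (j + 1), w n (k + 1) := by
  have hdisj : (Finset.range (j + 1) : Set ℕ).PairwiseDisjoint (borelGensLast n <| · + 1) :=
    fun k _ k' _ hkk' => Set.disjoint_left.mpr fun l hk hk' =>
      hkk' (by simpa using hk.2.symm.trans hk'.2)
  rw [w_eq_ncard_borelGensLast, borelGensLast_succ_succ hn hj,
    Set.ncard_image_of_injective _ (List.append_left_injective _), ← Finset.set_biUnion_coe,
    Set.Finite.ncard_biUnion (Finset.finite_toSet _)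
      (fun k _ => (borelGens_finite n).subset fun l hl => hl.1) hdisj,
    finsum_mem_coe_finset]
  rfl

lemma w_eq_zero_of_lt {n j : ℕ} (h : n < j) : w n j = 0 := by
  rw [w_eq_ncard_borelGensLast, Set.eq_empty_of_forall_notMem (s := borelGensLast n j) ?_,
    Set.ncard_empty]
  rintro l ⟨hl, hj⟩
  have := (mem_Icc_of_getLast?_eq hl hj).2
  omega

lemma w_one_one : w 1 1 = 1 := by
  suffices borelGensLast 1 1 = {[1]} by rw [w_eq_ncard_borelGensLast, this, Set.ncard_singleton]
  ext l
  simp only [borelGensLast, Set.mem_ofPred_eq, Set.mem_singleton_iff]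
  constructor
  · rintro ⟨hl, hlast⟩
    obtain ⟨l', rfl⟩ := List.getLast?_eq_some_iff.mp hlast
    simpa using hl.1
  · rintro rfl
    exact ⟨append_singleton_mem_borelGens_succ_iff (l := []).mpr
      ⟨⟨rfl, List.isChain_nil, by simp⟩, by simp, le_rfl, le_rfl⟩, rfl⟩

def catalanTriangle (n j : ℕ) : ℤ := (n + j).choose j - (n + j).choose (n + 1)

lemma catalanTriangle_succ_succ (n j : ℕ) :
    catalanTriangle (n + 1) (j + 1) = catalanTriangle (n + 1) j + catalanTriangle n (j + 1) := by
  simp only [catalanTriangle, show n + 1 + (j + 1) = n + j + 1 + 1 by ring,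
    show n + 1 + j = n + j + 1 by ring, show n + (j + 1) = n + j + 1 by ring,
    Nat.choose_succ_succ', Nat.cast_add]
  ring

lemma sum_range_catalanTriangle (n j : ℕ) :
    ∑ k ∈ Finset.range (j + 1), catalanTriangle n k = catalanTriangle (n + 1) j := by
  induction j with
  | zero => simp [catalanTriangle]
  | succ j ih => rw [Finset.sum_range_succ, ih, catalanTriangle_succ_succ]

lemma catalanTriangle_self_succ (n : ℕ) : catalanTriangle n (n + 1) = 0 := by
  simp [catalanTriangle]

lemma catalanTriangle_self (n : ℕ) : catalanTriangle n n = catalan n := by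
  have hcat : ((n + 1) * catalan n : ℤ) = (n + n).choose n := by
    rw [← two_mul]; exact_mod_cast succ_mul_catalan_eq_centralBinom n
  have hsucc : ((n + n).choose (n + 1) * (n + 1) : ℤ) = (n + n).choose n * n := by
    exact_mod_cast (Nat.add_sub_cancel n n ▸ Nat.choose_succ_right_eq (n + n) n)
  have hpos : (n + 1 : ℤ) ≠ 0 := by positivity
  apply mul_left_cancel₀ hpos
  rw [hcat, catalanTriangle]
  linear_combination -hsucc

lemma natCast_w_succ_succ_eq_catalanTriangle (n : ℕ) :
    ∀ j ≤ n + 1, (w (n + 1) (j + 1) : ℤ) = catalanTriangle n j := by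
  induction n with
  | zero =>
    intro j hj
    interval_cases j
    · simp [w_one_one, catalanTriangle]
    · simp [w_eq_zero_of_lt, catalanTriangle]
  | succ n ih =>
    intro j hj
    rcases hj.lt_or_eq with hj | rfl
    · rw [w_succ_succ (by omega) (by omega), Nat.cast_sum, ← sum_range_catalanTriangle]
      exact Finset.sum_congr rfl fun k hk => ih k (by simp at hk; omega)
    · rw [w_eq_zero_of_lt (by omega), catalanTriangle_self_succ, Nat.cast_zero]

lemma sum_range_w_eq_catalan {m : ℕ} (hm : 1 ≤ m) :
    ∑ k ∈ Finset.range (m + 1), w m (k + 1) = catalan m := by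
  obtain ⟨n, rfl⟩ := Nat.exists_eq_add_of_le' hm
  rw [← w_succ_succ hm le_rfl]
  exact_mod_cast (natCast_w_succ_succ_eq_catalanTriangle (n + 1) (n + 1) (by omega)).trans
    (catalanTriangle_self _)

lemma b_eq_sum_range (n i : ℕ) : b n i = ∑ j ∈ Finset.range n, j.choose i * w n (j + 1) := by
  rw [b, ← Finset.Ico_add_one_right_eq_Icc, Finset.sum_Ico_eq_sum_range]
  simp [add_comm]

lemma sum_Ico_choose_add_choose (i : ℕ) {a c : ℕ} (h : a ≤ c) :
    ∑ s ∈ Finset.Ico a c, s.choose i + a.choose (i + 1) = c.choose (i + 1) := by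
  induction c, h using Nat.le_induction with
  | base => simp
  | succ c hac ih =>
    rw [Finset.sum_Ico_succ_top hac, add_right_comm, ih, Nat.choose_succ_succ', add_comm]

lemma b_succ_add_b_succ_right {m : ℕ} (hm : 1 ≤ m) (i : ℕ) :
    b (m + 1) i + b m (i + 1) =
      (m + 1).choose (i + 1) * ∑ k ∈ Finset.range (m + 1), w m (k + 1) := by
  have hswap : b (m + 1) i =
      ∑ k ∈ Finset.range (m + 1),
        (∑ j ∈ Finset.Ico k (m + 1), j.choose i) * w m (k + 1) := by
    calc b (m + 1) i
        = ∑ j ∈ Finset.Ico 0 (m + 1), ∑ k ∈ Finset.Ico 0 (j + 1),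
            j.choose i * w m (k + 1) := by
          rw [b_eq_sum_range, ← Finset.range_eq_Ico]
          refine Finset.sum_congr rfl fun j hj => ?_
          rw [w_succ_succ hm (by simp at hj; omega), Finset.mul_sum, Finset.range_eq_Ico]
      _ = ∑ k ∈ Finset.range (m + 1), ∑ j ∈ Finset.Ico k (m + 1),
            j.choose i * w m (k + 1) := by
          rw [← Finset.sum_Ico_Ico_comm, Finset.range_eq_Ico]
      _ = _ := by simp only [Finset.sum_mul]
  have hext : b m (i + 1) = ∑ k ∈ Finset.range (m + 1), k.choose (i + 1) * w m (k + 1) := by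
    rw [b_eq_sum_range, Finset.sum_range_succ, w_eq_zero_of_lt (by omega), mul_zero, add_zero]
  rw [hswap, hext, ← Finset.sum_add_distrib, Finset.mul_sum]
  refine Finset.sum_congr rfl fun k hk => ?_
  rw [← add_mul, sum_Ico_choose_add_choose i (by simp at hk; omega)]

theorem betti_recursion_catalan_general (n : ℕ) (i : ℕ) (hi : 1 ≤ i) :
    b n (i - 1) + b (n - 1) i = Nat.choose n i * catalan (n - 1) := by
  obtain ⟨i, rfl⟩ := Nat.exists_eq_add_of_le' hi
  rw [Nat.add_sub_cancel]
  match n with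
  | 0 => simp [b, Nat.choose_eq_zero_of_lt]
  | 1 => simp [b, w_one_one, Nat.choose_succ_succ]
  | m + 1 + 1 =>
    rw [Nat.add_sub_cancel, b_succ_add_b_succ_right (by omega),
      sum_range_w_eq_catalan (by omega)]

/-- For all `n ≥ 1` and all `i ≥ 1`:
`b_{i-1}(n) + b_i(n-1) = binom(n, i)·C_{n-1}`. -/
theorem betti_recursion_catalan (n : ℕ) (hn : 1 ≤ n) (i : ℕ) (hi : 1 ≤ i) :
    b n (i - 1) + b (n - 1) i = Nat.choose n i * catalan (n - 1) :=
  betti_recursion_catalan_general n i hi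
end
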